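/- arXiv:1806.05317 — 4 statements merged into one kernel-verified Lean document; each statement's English description precedes it below -/
import Mathlib

section
/- Let J be a nonnegative random variable whose Laplace transform is L(t) = exp(-t^α) for some α ∈ (0,1) (i.e. J is α-stable positive), and let Y₁, …, Yₙ be i.i.d. 1-Fréchet random variables with scale parameters σ₁, …, σₙ > 0, independent of J. Then the vector (J Y₁, …, J Yₙ) satisfies P(J Yₖ ≤ xₖ, k=1,…,n) = exp(-(Σₖ σₖ/xₖ)^α) for all xₖ > 0; this is the multivariate α-logistic distribution. -/
open MeasureTheory ProbabilityTheory

/-- `Y` is a 1-Fréchet random variable with scale parameter `σ`. -/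
def IsFrechet {Ω : Type*} [MeasurableSpace Ω] (μ : Measure Ω) (Y : Ω → ℝ) (σ : ℝ) : Prop :=
  (∀ x : ℝ, 0 < x → μ {ω | Y ω ≤ x} = ENNReal.ofReal (Real.exp (-σ / x))) ∧
  (∀ x : ℝ, x ≤ 0 → μ {ω | Y ω ≤ x} = 0)

/-! Conditionally on `J = j`, the events `{j * Y k ≤ x k}` are independent with probabilities
`exp (-j * σ k / x k)`, so the joint probability is `E[exp (-J * ∑ k, σ k / x k)]`, the Laplace
transform of `J` at `∑ k, σ k / x k`. -/

namespace ProbabilityTheory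

variable {Ω : Type*} [MeasurableSpace Ω] {μ : Measure Ω}

lemma iIndepFun.indepFun_option_elim {ι β : Type*} [Fintype ι] [MeasurableSpace β]
    {X : Ω → β} {Y : ι → Ω → β} (h : iIndepFun (fun i : Option ι => i.elim X Y) μ)
    (hX : Measurable X) (hY : ∀ i, Measurable (Y i)) :
    IndepFun X (fun ω i => Y i ω) μ := by
  have hXY := h.indepFun_finset {none} (Finset.univ.map ⟨some, Option.some_injective ι⟩)
    (by simp) (by rintro (_ | i) <;> simp [hX, hY])
  exact hXY.comp (measurable_pi_apply ⟨none, by simp⟩)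
    (measurable_pi_lambda _ fun i => measurable_pi_apply ⟨some i, by simp⟩)

lemma IndepFun.measure_prodMk_mem_eq_lintegral [IsFiniteMeasure μ] {α β : Type*}
    [MeasurableSpace α] [MeasurableSpace β] {J : Ω → α} {V : Ω → β} (h : IndepFun J V μ)
    (hJ : Measurable J) (hV : Measurable V) {B : Set (α × β)} (hB : MeasurableSet B) :
    μ {ω | (J ω, V ω) ∈ B} = ∫⁻ ω, μ {ω' | (J ω, V ω') ∈ B} ∂μ := by
  have hmap := (indepFun_iff_map_prod_eq_prod_map_map hJ.aemeasurable hV.aemeasurable).mp h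
  calc μ {ω | (J ω, V ω) ∈ B}
      = (μ.map J).prod (μ.map V) B := by rw [← hmap, Measure.map_apply (hJ.prodMk hV) hB]; rfl
    _ = ∫⁻ j, μ.map V (Prod.mk j ⁻¹' B) ∂μ.map J := Measure.prod_apply hB
    _ = ∫⁻ ω, μ {ω' | (J ω, V ω') ∈ B} ∂μ := by
      rw [lintegral_map (measurable_measure_prodMk_left hB) hJ]
      exact lintegral_congr fun ω => Measure.map_apply hV (measurable_prodMk_left hB)

lemma lintegral_ofReal_exp_neg_mul [IsFiniteMeasure μ] {J : Ω → ℝ} (hJ : Measurable J)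
    (hJnn : ∀ ω, 0 ≤ J ω) {s : ℝ} (hs : 0 ≤ s) :
    ∫⁻ ω, ENNReal.ofReal (Real.exp (-s * J ω)) ∂μ
      = ENNReal.ofReal (∫ ω, Real.exp (-s * J ω) ∂μ) := by
  have hint : Integrable (fun ω => Real.exp (-s * J ω)) μ := by
    refine (integrable_const 1).mono' (by fun_prop) (Filter.Eventually.of_forall fun ω => ?_)
    rw [Real.norm_of_nonneg (Real.exp_pos _).le, Real.exp_le_one_iff]
    nlinarith [hJnn ω]
  exact (ofReal_integral_eq_lintegral_ofReal hint
    (Filter.Eventually.of_forall fun ω => (Real.exp_pos _).le)).symm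

end ProbabilityTheory

lemma IsFrechet.measure_mul_le {Ω : Type*} [MeasurableSpace Ω] {μ : Measure Ω}
    [IsProbabilityMeasure μ] {Y : Ω → ℝ} {σ : ℝ} (hY : IsFrechet μ Y σ) {j x : ℝ} (hj : 0 ≤ j)
    (hx : 0 < x) : μ {ω | j * Y ω ≤ x} = ENNReal.ofReal (Real.exp (-(σ / x) * j)) := by
  rcases hj.eq_or_lt with rfl | hj
  · simp [hx.le]
  · have hset : {ω | j * Y ω ≤ x} = {ω | Y ω ≤ x / j} := by
      ext ω; simp [le_div_iff₀ hj, mul_comm]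
    rw [hset, hY.1 _ (div_pos hx hj)]
    congr 2
    field_simp

lemma IsFrechet.measure_forall_mul_le {Ω ι : Type*} [MeasurableSpace Ω] {μ : Measure Ω}
    [IsProbabilityMeasure μ] [Fintype ι] {Y : ι → Ω → ℝ} {σ x : ι → ℝ}
    (hind : iIndepFun Y μ) (hY : ∀ k, IsFrechet μ (Y k) (σ k)) (hx : ∀ k, 0 < x k)
    {j : ℝ} (hj : 0 ≤ j) :
    μ {ω | ∀ k, j * Y k ω ≤ x k} = ENNReal.ofReal (Real.exp (-(∑ k, σ k / x k) * j)) := by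
  rw [Set.ofPred_forall, hind.meas_iInter (s := fun k => {ω | j * Y k ω ≤ x k})
    fun k => ⟨{y | j * y ≤ x k}, measurableSet_le (by fun_prop) measurable_const, rfl⟩]
  simp only [fun k => (hY k).measure_mul_le hj (hx k)]
  rw [← ENNReal.ofReal_prod_of_nonneg fun k _ => (Real.exp_pos _).le, ← Real.exp_sum,
    ← Finset.sum_mul, Finset.sum_neg_distrib]

theorem stmt6_general {Ω : Type*} [MeasurableSpace Ω] (μ : Measure Ω) [IsProbabilityMeasure μ]
    (n : ℕ) (α : ℝ)
    (J : Ω → ℝ) (hJmeas : Measurable J) (hJnn : ∀ ω, 0 ≤ J ω)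
    -- `J` is positive `α`-stable: its Laplace transform is `exp (-t^α)`
    (hJstable : ∀ t : ℝ, 0 ≤ t → ∫ ω, Real.exp (-t * J ω) ∂μ = Real.exp (-t ^ α))
    (Y : Fin n → Ω → ℝ) (hYmeas : ∀ k, Measurable (Y k))
    (σ : Fin n → ℝ) (hσ : ∀ k, 0 < σ k) (hY : ∀ k, IsFrechet μ (Y k) (σ k))
    (hindep : iIndepFun
      (fun i : Option (Fin n) => i.elim J Y) μ) :
    ∀ x : Fin n → ℝ, (∀ k, 0 < x k) →
      μ {ω | ∀ k, J ω * Y k ω ≤ x k}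
        = ENNReal.ofReal (Real.exp (-(∑ k, σ k / x k) ^ α)) := by
  intro x hx
  have hs : 0 ≤ ∑ k, σ k / x k := Finset.sum_nonneg fun k _ => (div_pos (hσ k) (hx k)).le
  have hB : MeasurableSet {p : ℝ × (Fin n → ℝ) | ∀ k, p.1 * p.2 k ≤ x k} := by
    rw [Set.ofPred_forall]
    exact .iInter fun k => measurableSet_le (by fun_prop) measurable_const
  calc μ {ω | ∀ k, J ω * Y k ω ≤ x k}
      = ∫⁻ ω, μ {ω' | ∀ k, J ω * Y k ω' ≤ x k} ∂μ :=
        (hindep.indepFun_option_elim hJmeas hYmeas).measure_prodMk_mem_eq_lintegral hJmeas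
          (measurable_pi_lambda _ hYmeas) hB
    _ = ∫⁻ ω, ENNReal.ofReal (Real.exp (-(∑ k, σ k / x k) * J ω)) ∂μ :=
        lintegral_congr fun ω => IsFrechet.measure_forall_mul_le
          (hindep.precomp (Option.some_injective _)) hY hx (hJnn ω)
    _ = ENNReal.ofReal (Real.exp (-(∑ k, σ k / x k) ^ α)) := by
        rw [lintegral_ofReal_exp_neg_mul hJmeas hJnn hs, hJstable _ hs]

theorem stmt6 {Ω : Type*} [MeasurableSpace Ω] (μ : Measure Ω) [IsProbabilityMeasure μ]
    (n : ℕ) (α : ℝ) (hα : α ∈ Set.Ioo (0 : ℝ) 1)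
    (J : Ω → ℝ) (hJmeas : Measurable J) (hJnn : ∀ ω, 0 ≤ J ω)
    -- `J` is positive `α`-stable: its Laplace transform is `exp (-t^α)`
    (hJstable : ∀ t : ℝ, 0 ≤ t → ∫ ω, Real.exp (-t * J ω) ∂μ = Real.exp (-t ^ α))
    (Y : Fin n → Ω → ℝ) (hYmeas : ∀ k, Measurable (Y k))
    (σ : Fin n → ℝ) (hσ : ∀ k, 0 < σ k) (hY : ∀ k, IsFrechet μ (Y k) (σ k))
    (hindep : iIndepFun
      (fun i : Option (Fin n) => i.elim J Y) μ) :
    ∀ x : Fin n → ℝ, (∀ k, 0 < x k) →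
      μ {ω | ∀ k, J ω * Y k ω ≤ x k}
        = ENNReal.ofReal (Real.exp (-(∑ k, σ k / x k) ^ α)) :=
  stmt6_general μ n α J hJmeas hJnn hJstable Y hYmeas σ hσ hY hindep
end

section
/- For any α ∈ [0,1) and θ > -α, the PD(α,θ) probabilities sum to 1 over all partitions of [n]; i.e., Σ over partitions π of [n] with block sizes n₁,…,n_k of ((θ+α)_{k-1↑α} ∏ᵢ (1-α)_{nᵢ-1↑1}) / ((θ+1)_{n-1↑α}) = 1. -/
/-!
Every partition of `insert a t` arises exactly once from a
partition `Q` of `t`, either by adding `{a}` as a new block or by putting `a` into a block `B`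
of `Q`. The first move multiplies the PD(α,θ) weight by `θ + #Q.parts * α`, the second by
`#B - α`; since the block sizes add up to `#t`, these factors sum to `θ + #t`, which is exactly
the factor by which `(θ + 1)_{n-1↑1}` grows. Induction on the ground set then shows that the
weights sum to the normalizing constant.
-/

/-- `(x)_{m↑a} = ∏_{j=0}^{m-1} (x + j a)`, the generalized rising factorial. -/
noncomputable def risingFac (x a : ℝ) (m : ℕ) : ℝ := ∏ j ∈ Finset.range m, (x + j * a)

open Finset

lemma Finset.image_sdiff_singleton_eq_self {ι : Type*} [DecidableEq ι] {a : ι}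
    {S : Finset (Finset ι)} (h : ∀ D ∈ S, a ∉ D) : S.image (· \ {a}) = S := by
  conv_rhs => rw [← image_id (s := S)]
  exact image_congr fun D hD => by simp [sdiff_singleton_eq_erase, erase_eq_of_notMem (h D hD)]

namespace Finpartition

variable {ι : Type*} [DecidableEq ι] {a : ι} {t : Finset ι}

lemma notMem_of_mem_parts (Q : Finpartition t) (ha : a ∉ t) {B : Finset ι} (hB : B ∈ Q.parts) :
    a ∉ B :=
  fun h => ha (Q.le hB h)

def insertSingleton (Q : Finpartition t) (ha : a ∉ t) : Finpartition (t.cons a ha) :=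
  Q.extend (b := {a}) (singleton_ne_empty a) (disjoint_singleton_right.2 ha)
    (by ext; simp)

def insertIntoPart (Q : Finpartition t) (ha : a ∉ t) (B : Finset ι) (hB : B ∈ Q.parts) :
    Finpartition (t.cons a ha) where
  parts := insert (insert a B) (Q.parts.erase B)
  supIndep := by
    rw [supIndep_iff_pairwiseDisjoint, coe_insert]
    refine (Q.disjoint.subset (coe_subset.2 (erase_subset _ _))).insert fun D hD _ => ?_
    rw [mem_coe, mem_erase] at hD
    exact disjoint_insert_left.2
      ⟨Q.notMem_of_mem_parts ha hD.2, Q.disjoint hB hD.2 (Ne.symm hD.1)⟩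
  sup_parts := by
    have h := Q.sup_parts
    rw [← insert_erase hB, sup_insert, id] at h
    rw [sup_insert, id, sup_eq_union, insert_union, ← sup_eq_union, h, cons_eq_insert]
  bot_notMem := by
    simp only [bot_eq_empty, mem_insert, mem_erase, not_or]
    exact ⟨(insert_ne_empty a B).symm, fun h => Q.bot_notMem h.2⟩

lemma parts_insertSingleton (Q : Finpartition t) (ha : a ∉ t) :
    (Q.insertSingleton ha).parts = insert {a} Q.parts := rfl

lemma parts_insertIntoPart (Q : Finpartition t) (ha : a ∉ t) (B : Finset ι)
    (hB : B ∈ Q.parts) :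
    (Q.insertIntoPart ha B hB).parts = insert (insert a B) (Q.parts.erase B) := rfl

lemma card_parts_insertSingleton (Q : Finpartition t) (ha : a ∉ t) :
    #(Q.insertSingleton ha).parts = #Q.parts + 1 :=
  Q.card_extend _ _

lemma card_parts_insertIntoPart (Q : Finpartition t) (ha : a ∉ t) (B : Finset ι)
    (hB : B ∈ Q.parts) : #(Q.insertIntoPart ha B hB).parts = #Q.parts := by
  rw [parts_insertIntoPart, card_insert_of_notMem, card_erase_add_one hB]
  exact fun h => Q.notMem_of_mem_parts ha (mem_of_mem_erase h) (mem_insert_self a B)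

def insertElem (ha : a ∉ t) :
    (Σ Q : Finpartition t, Option Q.parts) → Finpartition (t.cons a ha)
  | ⟨Q, none⟩ => Q.insertSingleton ha
  | ⟨Q, some B⟩ => Q.insertIntoPart ha B B.2

def eraseElem (ha : a ∉ t) (P : Finpartition (t.cons a ha)) : Finpartition t :=
  (P.avoid {a}).copy (by grind)

lemma parts_eraseElem (ha : a ∉ t) (P : Finpartition (t.cons a ha)) :
    (eraseElem ha P).parts = (insert (P.part a \ {a}) (P.parts.erase (P.part a))).erase ∅ := by
  have haP : P.part a ∈ P.parts := P.part_mem.2 (mem_cons_self a t)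
  have hrest : ∀ D ∈ P.parts.erase (P.part a), a ∉ D := fun D hD haD =>
    (mem_erase.1 hD).1 (P.part_eq_of_mem (mem_of_mem_erase hD) haD).symm
  change (P.parts.image (· \ {a})).erase ∅ = _
  conv_lhs => rw [← insert_erase haP, image_insert, image_sdiff_singleton_eq_self hrest]

lemma eraseElem_insertElem (ha : a ∉ t) (x : Σ Q : Finpartition t, Option Q.parts) :
    eraseElem ha (insertElem ha x) = x.1 := by
  obtain ⟨Q, _ | ⟨B, hB⟩⟩ := x <;> ext1 <;>
    change ((insertElem ha _).parts.image (· \ {a})).erase ∅ = Q.parts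
  · rw [insertElem, parts_insertSingleton, image_insert,
      image_sdiff_singleton_eq_self fun D => Q.notMem_of_mem_parts ha, sdiff_self,
      bot_eq_empty, erase_insert Q.empty_notMem_parts]
  · rw [insertElem, parts_insertIntoPart, image_insert,
      image_sdiff_singleton_eq_self fun D hD => Q.notMem_of_mem_parts ha
        (mem_of_mem_erase hD),
      insert_sdiff_of_mem _ (mem_singleton_self a), sdiff_singleton_eq_erase,
      erase_eq_of_notMem (Q.notMem_of_mem_parts ha hB), insert_erase hB,
      erase_eq_of_notMem Q.empty_notMem_parts]

lemma part_insertElem (ha : a ∉ t) (Q : Finpartition t) (o : Option Q.parts) :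
    (insertElem ha ⟨Q, o⟩).part a = o.elim {a} (fun B => insert a B.1) := by
  rcases o with _ | ⟨B, hB⟩
  · exact part_eq_of_mem _ (mem_insert_self _ _) (mem_singleton_self a)
  · exact part_eq_of_mem _ (mem_insert_self _ _) (mem_insert_self a B)

lemma insert_ne_singleton_of_mem_parts (Q : Finpartition t) (ha : a ∉ t) {B : Finset ι}
    (hB : B ∈ Q.parts) : insert a B ≠ {a} := by
  obtain ⟨b, hb⟩ := Q.nonempty_of_mem_parts hB
  intro h
  have hba : b = a := mem_singleton.1 (h ▸ mem_insert_of_mem hb)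
  exact Q.notMem_of_mem_parts ha hB (hba ▸ hb)

lemma insertElem_injective (ha : a ∉ t) : Function.Injective (insertElem ha) := by
  rintro ⟨Q₁, o₁⟩ ⟨Q₂, o₂⟩ h
  obtain rfl : Q₁ = Q₂ := by simpa only [eraseElem_insertElem] using congrArg (eraseElem ha) h
  have hpart := congrArg (·.part a) h
  simp only [part_insertElem] at hpart
  congr 1
  rcases o₁ with _ | ⟨B₁, hB₁⟩ <;> rcases o₂ with _ | ⟨B₂, hB₂⟩
  · rfl
  · exact absurd hpart.symm (Q₁.insert_ne_singleton_of_mem_parts ha hB₂)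
  · exact absurd hpart (Q₁.insert_ne_singleton_of_mem_parts ha hB₁)
  · have hB : B₁ = B₂ := by
      simpa [erase_insert (Q₁.notMem_of_mem_parts ha hB₁),
        erase_insert (Q₁.notMem_of_mem_parts ha hB₂)] using congrArg (·.erase a) hpart
    simp [hB]

lemma exists_insertElem_eraseElem_eq (ha : a ∉ t) (P : Finpartition (t.cons a ha)) :
    ∃ o, insertElem ha ⟨eraseElem ha P, o⟩ = P := by
  have hparts := parts_eraseElem ha P
  set C := P.part a
  have hC : C ∈ P.parts := P.part_mem.2 (mem_cons_self a t)
  have haC : a ∈ C := P.mem_part (mem_cons_self a t)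
  have hE : ∅ ∉ P.parts.erase C := fun h => P.empty_notMem_parts (mem_of_mem_erase h)
  by_cases hCa : C = {a}
  · rw [show C \ {a} = ∅ by rw [hCa, sdiff_self]; rfl, erase_insert hE] at hparts
    refine ⟨none, Finpartition.ext ?_⟩
    rw [insertElem, parts_insertSingleton, hparts, ← hCa, insert_erase hC]
  · have hBne : C \ {a} ≠ ∅ := fun h => hCa (by
      rw [← insert_sdiff_self_of_mem haC, h]; rfl)
    have hBC : C \ {a} ∉ P.parts.erase C := fun h => by
      obtain ⟨b, hb⟩ := nonempty_iff_ne_empty.2 hBne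
      have := P.eq_of_mem_parts (mem_of_mem_erase h) hC hb (sdiff_subset hb)
      exact (mem_erase.1 h).1 this
    rw [erase_insert_of_ne hBne, erase_eq_of_notMem hE] at hparts
    refine ⟨some ⟨C \ {a}, hparts ▸ mem_insert_self _ _⟩, Finpartition.ext ?_⟩
    change insert (insert a (C \ {a})) ((eraseElem ha P).parts.erase (C \ {a})) = P.parts
    rw [insert_sdiff_self_of_mem haC, hparts, erase_insert hBC, insert_erase hC]

lemma insertElem_bijective (ha : a ∉ t) : Function.Bijective (insertElem ha) :=
  ⟨insertElem_injective ha, fun P =>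
    let ⟨o, h⟩ := exists_insertElem_eraseElem_eq ha P; ⟨⟨_, o⟩, h⟩⟩

end Finpartition

lemma risingFac_zero (x a : ℝ) : risingFac x a 0 = 1 := prod_range_zero _

lemma risingFac_succ (x a : ℝ) (m : ℕ) :
    risingFac x a (m + 1) = risingFac x a m * (x + m * a) :=
  prod_range_succ _ _

lemma risingFac_pos {x a : ℝ} (hx : 0 < x) (ha : 0 ≤ a) (m : ℕ) : 0 < risingFac x a m :=
  prod_pos fun _ _ => by positivity

section PDWeight

open Finpartition

variable {ι : Type*} [DecidableEq ι] {a : ι} {t : Finset ι}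

noncomputable def pdWeight (α θ : ℝ) {s : Finset ι} (P : Finpartition s) : ℝ :=
  risingFac (θ + α) α (#P.parts - 1) * ∏ B ∈ P.parts, risingFac (1 - α) 1 (#B - 1)

lemma pdWeight_insertSingleton (α θ : ℝ) (ha : a ∉ t) (ht : t.Nonempty) (Q : Finpartition t) :
    pdWeight α θ (Q.insertSingleton ha) = pdWeight α θ Q * (θ + #Q.parts * α) := by
  obtain ⟨k, hk⟩ : ∃ k, #Q.parts = k + 1 :=
    Nat.exists_eq_succ_of_ne_zero (card_pos.2 (Q.parts_nonempty ht.ne_empty)).ne'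
  rw [pdWeight, pdWeight, card_parts_insertSingleton, parts_insertSingleton,
    prod_insert fun h => Q.notMem_of_mem_parts ha h (mem_singleton_self a), hk,
    Nat.add_sub_cancel, Nat.add_sub_cancel, risingFac_succ, card_singleton, Nat.sub_self,
    risingFac_zero]
  push_cast
  ring

lemma pdWeight_insertIntoPart (α θ : ℝ) (ha : a ∉ t) (Q : Finpartition t) {B : Finset ι}
    (hB : B ∈ Q.parts) :
    pdWeight α θ (Q.insertIntoPart ha B hB) = pdWeight α θ Q * (#B - α) := by
  obtain ⟨m, hm⟩ : ∃ m, #B = m + 1 :=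
    Nat.exists_eq_succ_of_ne_zero (card_pos.2 (Q.nonempty_of_mem_parts hB)).ne'
  have hnew : insert a B ∉ Q.parts.erase B := fun h =>
    Q.notMem_of_mem_parts ha (mem_of_mem_erase h) (mem_insert_self a B)
  rw [pdWeight, pdWeight, card_parts_insertIntoPart, parts_insertIntoPart, prod_insert hnew,
    ← prod_erase_mul _ _ hB, card_insert_of_notMem (Q.notMem_of_mem_parts ha hB), hm,
    Nat.add_sub_cancel, Nat.add_sub_cancel, risingFac_succ]
  push_cast
  ring

lemma sum_pdWeight_insertElem (α θ : ℝ) (ha : a ∉ t) (ht : t.Nonempty) (Q : Finpartition t) :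
    ∑ o : Option Q.parts, pdWeight α θ (insertElem ha ⟨Q, o⟩) =
      pdWeight α θ Q * (θ + #t) := by
  rw [Fintype.sum_option]
  simp only [insertElem, pdWeight_insertSingleton α θ ha ht, pdWeight_insertIntoPart]
  rw [sum_coe_sort Q.parts fun B => pdWeight α θ Q * (#B - α), ← mul_sum, sum_sub_distrib,
    sum_const, nsmul_eq_mul, ← Nat.cast_sum, Q.sum_card_parts]
  ring

theorem sum_pdWeight (α θ : ℝ) (s : Finset ι) :
    ∑ P : Finpartition s, pdWeight α θ P = risingFac (θ + 1) 1 (#s - 1) := by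
  rcases s.eq_empty_or_nonempty with rfl | hs
  · let : Unique (Finpartition (∅ : Finset ι)) := inferInstanceAs (Unique (Finpartition ⊥))
    rw [Fintype.sum_unique]
    show pdWeight α θ (Finpartition.empty _) = _
    simp [pdWeight, Finpartition.empty, risingFac_zero]
  induction hs using Finset.Nonempty.cons_induction with
  | singleton a =>
    -- `P` is a stray section variable of `IsAtom.uniqueFinpartition`; any value will do.
    let := (isAtom_singleton a).uniqueFinpartition (P := ⊥)
    rw [Fintype.sum_unique]
    show pdWeight α θ (Finpartition.indiscrete (singleton_ne_empty a)) = _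
    simp [pdWeight, risingFac_zero]
  | cons a t ha ht ih =>
    obtain ⟨m, hm⟩ : ∃ m, #t = m + 1 := Nat.exists_eq_succ_of_ne_zero (card_pos.2 ht).ne'
    calc ∑ P, pdWeight α θ P
        = ∑ x : Σ Q : Finpartition t, Option Q.parts, pdWeight α θ (insertElem ha x) :=
          (Fintype.sum_bijective _ (insertElem_bijective ha) _ _ fun _ => rfl).symm
      _ = ∑ Q : Finpartition t, pdWeight α θ Q * (θ + #t) := by
          rw [Fintype.sum_sigma]
          exact Fintype.sum_congr _ _ (sum_pdWeight_insertElem α θ ha ht)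
      _ = risingFac (θ + 1) 1 (#(t.cons a ha) - 1) := by
          rw [← sum_mul, ih, card_cons, hm, Nat.add_sub_cancel, Nat.add_sub_cancel,
            risingFac_succ]
          push_cast
          ring

end PDWeight

theorem stmt15_general (α θ : ℝ) (hα : α ∈ Set.Ico (0 : ℝ) 1) (hθ : -α < θ)
    (n : ℕ) :
    ∑ P : Finpartition (Finset.univ : Finset (Fin n)),
      (risingFac (θ + α) α (P.parts.card - 1)
        * ∏ B ∈ P.parts, risingFac (1 - α) 1 (B.card - 1))
        / risingFac (θ + 1) 1 (n - 1) = 1 := by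
  have hden : 0 < risingFac (θ + 1) 1 (n - 1) :=
    risingFac_pos (by linarith [hα.2]) zero_le_one _
  rw [← sum_div, div_eq_one_iff_eq hden.ne']
  exact (sum_pdWeight α θ _).trans (by rw [card_univ, Fintype.card_fin])

theorem stmt15 (α θ : ℝ) (hα : α ∈ Set.Ico (0 : ℝ) 1) (hθ : -α < θ)
    (n : ℕ) (hn : 1 ≤ n) :
    ∑ P : Finpartition (Finset.univ : Finset (Fin n)),
      (risingFac (θ + α) α (P.parts.card - 1)
        * ∏ B ∈ P.parts, risingFac (1 - α) 1 (B.card - 1))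
        / risingFac (θ + 1) 1 (n - 1) = 1 :=
  stmt15_general α θ hα hθ n
end

section
/- Let W₁, W₂, … be independent random variables with Wₗ ~ Beta(1-α, θ+ℓα) for parameters α ∈ [0,1), θ > -α. Define the GEM(α,θ) sequence P̃₁ = W₁ and P̃ₗ = (1-W₁)⋯(1-W_{ℓ-1})Wₗ for ℓ ≥ 2. Then almost surely P̃ₗ ≥ 0 for all ℓ and Σₗ P̃ₗ = 1. -/
/-!
Write `Rₙ = ∏_{j<n} (1 - W_j)`. The partial sums of the GEM sequence telescope to `1 - Rₙ`,
so it suffices that `Rₙ → 0` almost surely. Each `W_j` lies in `(0,1)`, so `Rₙ` decreases, and by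
independence `E Rₙ = ∏_{j<n} b_j / (a + b_j)` with `a = 1 - α`, `b_j = θ + (j+1)α`, the mean of
`1 - W_j` being `b_j / (a + b_j)`. This product tends to `0` because `∑ a / (a + b_j)` diverges
like the harmonic series; a decreasing sequence whose expectations tend to `0` tends to `0` a.s.
-/

open MeasureTheory ProbabilityTheory

/-- The Beta(a,b) distribution on `[0,1]`, with density
`x^(a-1) (1-x)^(b-1) / B(a,b)` where `B(a,b) = Γ(a)Γ(b)/Γ(a+b)`. -/
noncomputable def betaMeasure' (a b : ℝ) : Measure ℝ :=
  volume.withDensity (fun x => ENNReal.ofReal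
    (if 0 < x ∧ x < 1 then
      x ^ (a - 1) * (1 - x) ^ (b - 1)
        / (Real.Gamma a * Real.Gamma b / Real.Gamma (a + b))
    else 0))

open Filter Topology

section StickBreaking

variable {w : ℕ → ℝ}

lemma prod_range_one_sub_nonneg (hw : ∀ j, w j ∈ Set.Icc (0 : ℝ) 1) (n : ℕ) :
    0 ≤ ∏ j ∈ Finset.range n, (1 - w j) :=
  Finset.prod_nonneg fun j _ => sub_nonneg.2 (hw j).2

lemma prod_range_one_sub_mul_nonneg (hw : ∀ j, w j ∈ Set.Icc (0 : ℝ) 1) (n : ℕ) :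
    0 ≤ (∏ j ∈ Finset.range n, (1 - w j)) * w n :=
  mul_nonneg (prod_range_one_sub_nonneg hw n) (hw n).1

lemma sum_range_prod_one_sub_mul (w : ℕ → ℝ) (n : ℕ) :
    ∑ ℓ ∈ Finset.range n, (∏ j ∈ Finset.range ℓ, (1 - w j)) * w ℓ
      = 1 - ∏ j ∈ Finset.range n, (1 - w j) := by
  induction n with
  | zero => simp
  | succ n ih => rw [Finset.sum_range_succ, ih, Finset.prod_range_succ]; ring

lemma hasSum_prod_range_one_sub_mul (hw : ∀ j, w j ∈ Set.Icc (0 : ℝ) 1)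
    (h : Tendsto (fun n => ∏ j ∈ Finset.range n, (1 - w j)) atTop (𝓝 0)) :
    HasSum (fun ℓ => (∏ j ∈ Finset.range ℓ, (1 - w j)) * w ℓ) 1 := by
  rw [hasSum_iff_tendsto_nat_of_nonneg (prod_range_one_sub_mul_nonneg hw)]
  simpa [sum_range_prod_one_sub_mul] using h.const_sub 1

lemma tendsto_prod_range_one_sub_of_not_summable (hw : ∀ j, w j ∈ Set.Icc (0 : ℝ) 1)
    (hns : ¬ Summable w) :
    Tendsto (fun n => ∏ j ∈ Finset.range n, (1 - w j)) atTop (𝓝 0) := by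
  have hsum : Tendsto (fun n => ∑ j ∈ Finset.range n, w j) atTop atTop :=
    (not_summable_iff_tendsto_nat_atTop_of_nonneg fun j => (hw j).1).1 hns
  refine squeeze_zero (prod_range_one_sub_nonneg hw) (fun n => ?_)
    (Real.tendsto_exp_atBot.comp (tendsto_neg_atTop_atBot.comp hsum))
  calc ∏ j ∈ Finset.range n, (1 - w j)
      ≤ ∏ j ∈ Finset.range n, Real.exp (-w j) :=
        Finset.prod_le_prod (fun j _ => sub_nonneg.2 (hw j).2)
          fun j _ => by linarith [Real.add_one_le_exp (-w j)]
    _ = Real.exp (-∑ j ∈ Finset.range n, w j) := by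
        rw [← Real.exp_sum, Finset.sum_neg_distrib]

end StickBreaking

lemma tendsto_prod_range_div_add {a : ℝ} (ha : 0 < a) {b : ℕ → ℝ} (hb : ∀ j, 0 < b j)
    {C : ℝ} (hC : ∀ j : ℕ, b j ≤ C * (j + 1)) :
    Tendsto (fun n => ∏ j ∈ Finset.range n, b j / (a + b j)) atTop (𝓝 0) := by
  have hc : ∀ j, a / (a + b j) ∈ Set.Icc (0 : ℝ) 1 := fun j =>
    ⟨(div_pos ha (add_pos ha (hb j))).le,
      div_le_one_of_le₀ (by linarith [hb j]) (by linarith [hb j])⟩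
  have hns : ¬ Summable fun j => a / (a + b j) := by
    intro hs
    have hC0 : 0 < C := by nlinarith [hb 0, hC 0]
    refine Real.not_summable_one_div_natCast ((summable_nat_add_iff 1).1 ?_)
    refine (hs.mul_left ((a + C) / a)).of_nonneg_of_le (fun j => by positivity) fun j => ?_
    have hj : (0 : ℝ) ≤ j := j.cast_nonneg
    rw [div_mul_div_comm, mul_comm (a + C), mul_div_mul_left _ _ ha.ne', Nat.cast_add_one,
      div_le_div_iff₀ (by positivity) (by linarith [hb j])]
    nlinarith [hC j]
  refine (tendsto_prod_range_one_sub_of_not_summable hc hns).congr fun n => ?_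
  refine Finset.prod_congr rfl fun j _ => ?_
  field_simp [(add_pos ha (hb j)).ne']
  ring

section Beta

lemma betaMeasure'_eq_betaMeasure (a b : ℝ) : betaMeasure' a b = betaMeasure a b := by
  rw [betaMeasure', betaMeasure]
  congr 1
  ext x
  rw [betaPDF_eq, beta]
  split_ifs <;> ring_nf

lemma ae_mem_Ioo_betaMeasure (a b : ℝ) : ∀ᵐ x ∂betaMeasure a b, x ∈ Set.Ioo 0 1 := by
  rw [betaMeasure, ae_withDensity_iff
    (show Measurable (betaPDF a b) from (measurable_betaPDFReal a b).ennreal_ofReal)]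
  exact ae_of_all _ fun x hx => ⟨lt_of_not_ge fun h => hx (betaPDF_eq_zero_of_nonpos h),
    lt_of_not_ge fun h => hx (betaPDF_eq_zero_of_one_le h)⟩

lemma beta_add_one_right {a b : ℝ} (ha : 0 < a) (hb : 0 < b) :
    beta a (b + 1) = b / (a + b) * beta a b := by
  have hΓ : Real.Gamma (a + b) ≠ 0 := (Real.Gamma_pos_of_pos (add_pos ha hb)).ne'
  rw [beta, beta, ← add_assoc, Real.Gamma_add_one hb.ne', Real.Gamma_add_one (by positivity)]
  field_simp

lemma betaPDF_mul_one_sub {a b : ℝ} (ha : 0 < a) (hb : 0 < b) (x : ℝ) :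
    betaPDF a b x * ENNReal.ofReal (1 - x)
      = ENNReal.ofReal (b / (a + b)) * betaPDF a (b + 1) x := by
  rcases le_or_gt x 0 with hx0 | hx0
  · simp [betaPDF_eq_zero_of_nonpos hx0]
  rcases le_or_gt 1 x with hx1 | hx1
  · simp [betaPDF_eq_zero_of_one_le hx1]
  have h1x : 0 < 1 - x := by linarith
  have := beta_pos ha hb
  rw [betaPDF_of_pos_lt_one hx0 hx1, betaPDF_of_pos_lt_one hx0 hx1,
    ← ENNReal.ofReal_mul (by positivity), ← ENNReal.ofReal_mul (by positivity),
    beta_add_one_right ha hb, add_sub_cancel_right, Real.rpow_sub_one h1x.ne']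
  field_simp

lemma lintegral_one_sub_betaMeasure {a b : ℝ} (ha : 0 < a) (hb : 0 < b) :
    ∫⁻ x, ENNReal.ofReal (1 - x) ∂betaMeasure a b = ENNReal.ofReal (b / (a + b)) := by
  rw [betaMeasure, lintegral_withDensity_eq_lintegral_mul _
    (show Measurable (betaPDF a b) from (measurable_betaPDFReal a b).ennreal_ofReal) (by fun_prop)]
  simp only [Pi.mul_apply, betaPDF_mul_one_sub ha hb]
  rw [lintegral_const_mul _
      (show Measurable (betaPDF a (b + 1)) from (measurable_betaPDFReal a (b + 1)).ennreal_ofReal),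
    lintegral_betaPDF_eq_one ha (by linarith), mul_one]

end Beta

section Residual

variable {Ω : Type*} [MeasurableSpace Ω] {μ : Measure Ω}

lemma ae_tendsto_zero_of_antitone_of_tendsto_lintegral {f : ℕ → Ω → ENNReal}
    (hf : ∀ n, Measurable (f n)) (hanti : ∀ᵐ ω ∂μ, Antitone fun n => f n ω)
    (hlim : Tendsto (fun n => ∫⁻ ω, f n ω ∂μ) atTop (𝓝 0)) :
    ∀ᵐ ω ∂μ, Tendsto (fun n => f n ω) atTop (𝓝 0) := by
  have hinf : ∫⁻ ω, ⨅ n, f n ω ∂μ = 0 :=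
    le_antisymm (ge_of_tendsto' hlim fun n => lintegral_mono fun ω => iInf_le _ n) bot_le
  filter_upwards [hanti, (lintegral_eq_zero_iff' (Measurable.iInf hf).aemeasurable).1 hinf]
    with ω hω h0
  rw [Pi.zero_apply] at h0
  exact h0 ▸ tendsto_atTop_iInf hω

lemma ae_tendsto_prod_range_one_sub {W : ℕ → Ω → ℝ} (hindep : iIndepFun W μ)
    (hmeas : ∀ j, Measurable (W j)) (hW : ∀ᵐ ω ∂μ, ∀ j, W j ω ∈ Set.Icc (0 : ℝ) 1)
    (hmean : Tendsto (fun n => ∏ j ∈ Finset.range n, ∫⁻ ω, ENNReal.ofReal (1 - W j ω) ∂μ)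
      atTop (𝓝 0)) :
    ∀ᵐ ω ∂μ, Tendsto (fun n => ∏ j ∈ Finset.range n, (1 - W j ω)) atTop (𝓝 0) := by
  set X : ℕ → Ω → ENNReal := fun j ω => ENNReal.ofReal (1 - W j ω)
  have hXmeas : ∀ j, Measurable (X j) := fun j => by fun_prop
  have hX : iIndepFun X μ := hindep.comp (fun _ x => ENNReal.ofReal (1 - x)) fun _ => by fun_prop
  have hres := ae_tendsto_zero_of_antitone_of_tendsto_lintegral
    (f := fun n ω => ∏ j ∈ Finset.range n, X j ω) (fun n => by fun_prop)
    (hW.mono fun ω hω => antitone_nat_of_succ_le fun n => by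
      rw [Finset.prod_range_succ]
      exact mul_le_of_le_one_right' (ENNReal.ofReal_le_one.2 (by linarith [(hω n).1])))
    (by simpa only [lintegral_prod_eq_prod_lintegral_of_indepFun _ X hX hXmeas] using hmean)
  filter_upwards [hW, hres] with ω hω hlim
  have hX1 : ∀ j, (X j ω).toReal = 1 - W j ω := fun j =>
    ENNReal.toReal_ofReal (sub_nonneg.2 (hω j).2)
  simpa only [Function.comp_def, ENNReal.toReal_prod, hX1, ENNReal.toReal_zero] using
    (ENNReal.tendsto_toReal ENNReal.zero_ne_top).comp hlim

end Residual

theorem stmt16_general {Ω : Type*} [MeasurableSpace Ω] (μ : Measure Ω)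
    (α θ : ℝ) (hα : α ∈ Set.Ico (0 : ℝ) 1) (hθ : -α < θ)
    (W : ℕ → Ω → ℝ) (hWmeas : ∀ ℓ, Measurable (W ℓ))
    (hindep : iIndepFun W μ)
    -- `W ℓ ~ Beta(1-α, θ+(ℓ+1)α)` (here `W ℓ` denotes `W_{ℓ+1}` of the statement)
    (hbeta : ∀ ℓ : ℕ, Measure.map (W ℓ) μ = betaMeasure' (1 - α) (θ + (ℓ + 1) * α)) :
    -- the GEM(α,θ) sequence `P̃ₗ = (1-W₁)⋯(1-W_{ℓ-1}) Wₗ` is a.s. nonnegative and sums to 1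
    ∀ᵐ ω ∂μ,
      (∀ ℓ : ℕ, 0 ≤ (∏ j ∈ Finset.range ℓ, (1 - W j ω)) * W ℓ ω) ∧
      ∑' ℓ : ℕ, (∏ j ∈ Finset.range ℓ, (1 - W j ω)) * W ℓ ω = 1 := by
  obtain ⟨hα0, hα1⟩ := hα
  have hb : ∀ j : ℕ, 0 < θ + (j + 1) * α := fun j => by nlinarith [(j.cast_nonneg : (0 : ℝ) ≤ j)]
  have hmap : ∀ j, μ.map (W j) = betaMeasure (1 - α) (θ + (j + 1) * α) := fun j =>
    (hbeta j).trans (betaMeasure'_eq_betaMeasure _ _)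
  have hW : ∀ᵐ ω ∂μ, ∀ j, W j ω ∈ Set.Icc (0 : ℝ) 1 := ae_all_iff.2 fun j =>
    ae_of_ae_map (hWmeas j).aemeasurable <| (hmap j ▸ ae_mem_Ioo_betaMeasure _ _).mono
      fun _ h => Set.Ioo_subset_Icc_self h
  have hmean : ∀ j : ℕ, ∫⁻ ω, ENNReal.ofReal (1 - W j ω) ∂μ
      = ENNReal.ofReal ((θ + (j + 1) * α) / (1 - α + (θ + (j + 1) * α))) := fun j => by
    rw [← lintegral_map (f := fun x => ENNReal.ofReal (1 - x)) (by fun_prop) (hWmeas j), hmap j,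
      lintegral_one_sub_betaMeasure (by linarith) (hb j)]
  have hres : ∀ᵐ ω ∂μ, Tendsto (fun n => ∏ j ∈ Finset.range n, (1 - W j ω)) atTop (𝓝 0) := by
    refine ae_tendsto_prod_range_one_sub hindep hWmeas hW ?_
    have hfactor : ∀ j : ℕ, 0 ≤ (θ + (j + 1) * α) / (1 - α + (θ + (j + 1) * α)) := fun j =>
      (div_pos (hb j) (by linarith [hb j])).le
    simp_rw [hmean, ← ENNReal.ofReal_prod_of_nonneg fun j _ => hfactor j]
    simpa using ENNReal.tendsto_ofReal <| tendsto_prod_range_div_add (by linarith) hb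
      (C := |θ| + α) fun j => by
        nlinarith [le_abs_self θ, abs_nonneg θ, (j.cast_nonneg : (0 : ℝ) ≤ j)]
  filter_upwards [hW, hres] with ω hω hlim
  exact ⟨prod_range_one_sub_mul_nonneg hω, (hasSum_prod_range_one_sub_mul hω hlim).tsum_eq⟩

theorem stmt16 {Ω : Type*} [MeasurableSpace Ω] (μ : Measure Ω) [IsProbabilityMeasure μ]
    (α θ : ℝ) (hα : α ∈ Set.Ico (0 : ℝ) 1) (hθ : -α < θ)
    (W : ℕ → Ω → ℝ) (hWmeas : ∀ ℓ, Measurable (W ℓ))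
    (hindep : iIndepFun W μ)
    -- `W ℓ ~ Beta(1-α, θ+(ℓ+1)α)` (here `W ℓ` denotes `W_{ℓ+1}` of the statement)
    (hbeta : ∀ ℓ : ℕ, Measure.map (W ℓ) μ = betaMeasure' (1 - α) (θ + (ℓ + 1) * α)) :
    -- the GEM(α,θ) sequence `P̃ₗ = (1-W₁)⋯(1-W_{ℓ-1}) Wₗ` is a.s. nonnegative and sums to 1
    ∀ᵐ ω ∂μ,
      (∀ ℓ : ℕ, 0 ≤ (∏ j ∈ Finset.range ℓ, (1 - W j ω)) * W ℓ ω) ∧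
      ∑' ℓ : ℕ, (∏ j ∈ Finset.range ℓ, (1 - W j ω)) * W ℓ ω = 1 :=
  stmt16_general μ α θ hα hθ W hWmeas hindep hbeta
end

section
/- Let μ be the measure on (0,∞)ⁿ defined as the image of ν ⊗ Law(Y₁,…,Yₙ) under (j, y) ↦ j·y, where ν is a Lévy measure on (0,∞) with ∫ min(1,x)dν < ∞ and Y₁,…,Yₙ are independent 1-Fréchet with scale parameters σ₁,…,σₙ. Then for every x = (x₁,…,xₙ) ∈ (0,∞)ⁿ, μ([0,x]ᶜ) = g_ν(Σₖ σₖ/xₖ), where g_ν(t) = ∫₀^∞ (1 - e^{-tx}) dν(x) and [0,x]ᶜ = {y ∈ [0,∞)ⁿ : yₖ > xₖ for some k}. -/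
/-!
Conditioning on the first factor, `μ([0,x]ᶜ) = ∫ P(∃ k, j Y_k > x_k) dν(j)`. For `j > 0` the event
`{∀ k, Y_k ≤ x_k / j}` has probability `∏ exp(-σ_k j / x_k) = exp(-j ∑ σ_k / x_k)` by independence,
so the integrand is `1 - exp(-j ∑ σ_k / x_k)`; it is bounded by a multiple of `min 1 j`, hence
`ν`-integrable, and the lower integral is the Bochner integral.
-/

open MeasureTheory
open scoped ENNReal

lemma setOf_exists_lt_mul_eq_compl_pi {ι : Type*} {x : ι → ℝ} {j : ℝ} (hj : 0 < j) :
    {y : ι → ℝ | ∃ k, x k < j * y k} = (Set.univ.pi fun k => Set.Iic (x k / j))ᶜ := by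
  ext y
  simp only [Set.mem_ofPred_eq, Set.mem_compl_iff, Set.mem_univ_pi, Set.mem_Iic, not_forall,
    not_le, div_lt_iff₀ hj, mul_comm]

section FrechetProduct

variable {ι : Type*} [Fintype ι] {η : ι → Measure ℝ} [∀ k, IsProbabilityMeasure (η k)] {σ x : ι → ℝ}

lemma pi_Iic_div_of_frechet
    (hη : ∀ k, ∀ x : ℝ, 0 < x → η k (Set.Iic x) = ENNReal.ofReal (Real.exp (-σ k / x)))
    (hx : ∀ k, 0 < x k) {j : ℝ} (hj : 0 < j) :
    Measure.pi η (Set.univ.pi fun k => Set.Iic (x k / j))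
      = ENNReal.ofReal (Real.exp (-(∑ k, σ k / x k) * j)) := by
  rw [Measure.pi_pi, neg_mul, Finset.sum_mul, ← Finset.sum_neg_distrib, Real.exp_sum,
    ENNReal.ofReal_prod_of_nonneg fun k _ => (Real.exp_pos _).le]
  refine Finset.prod_congr rfl fun k _ => ?_
  rw [hη k _ (div_pos (hx k) hj)]
  congr 2
  field_simp

lemma pi_setOf_exists_lt_mul_of_frechet
    (hη : ∀ k, ∀ x : ℝ, 0 < x → η k (Set.Iic x) = ENNReal.ofReal (Real.exp (-σ k / x)))
    (hx : ∀ k, 0 < x k) {j : ℝ} (hj : 0 < j) :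
    Measure.pi η {y : ι → ℝ | ∃ k, x k < j * y k}
      = ENNReal.ofReal (1 - Real.exp (-(∑ k, σ k / x k) * j)) := by
  rw [setOf_exists_lt_mul_eq_compl_pi hj,
    measure_compl (.univ_pi fun _ => measurableSet_Iic) (measure_ne_top _ _),
    pi_Iic_div_of_frechet hη hx hj, measure_univ, ENNReal.ofReal_sub _ (Real.exp_pos _).le,
    ENNReal.ofReal_one]

end FrechetProduct

lemma one_sub_exp_neg_mul_le {t j : ℝ} (hj : 0 ≤ j) :
    1 - Real.exp (-t * j) ≤ max 1 t * min 1 j := by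
  rcases le_total j 1 with hj1 | hj1
  · rw [min_eq_right hj1]
    calc 1 - Real.exp (-t * j) ≤ t * j := by linarith [Real.add_one_le_exp (-t * j)]
      _ ≤ max 1 t * j := mul_le_mul_of_nonneg_right (le_max_right 1 t) hj
  · rw [min_eq_left hj1, mul_one]
    linarith [Real.exp_pos (-t * j), le_max_left 1 t]

lemma one_sub_exp_neg_mul_nonneg {t j : ℝ} (ht : 0 ≤ t) (hj : 0 ≤ j) :
    0 ≤ 1 - Real.exp (-t * j) := by
  rw [sub_nonneg, Real.exp_le_one_iff]
  nlinarith

lemma ae_pos_of_measure_setOf_le_zero {ν : Measure ℝ} (hν0 : ν {v | v ≤ 0} = 0) :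
    ∀ᵐ v ∂ν, 0 < v :=
  measure_eq_zero_iff_ae_notMem.mp hν0 |>.mono fun v hv => by simpa using hv

lemma integrable_one_sub_exp_neg_mul {ν : Measure ℝ} (hν0 : ν {v | v ≤ 0} = 0)
    (hνint : ∫⁻ v, ENNReal.ofReal (min 1 v) ∂ν < ∞) {t : ℝ} (ht : 0 ≤ t) :
    Integrable (fun v => 1 - Real.exp (-t * v)) ν := by
  have hpos := ae_pos_of_measure_setOf_le_zero hν0
  refine ⟨by fun_prop, ?_⟩
  rw [hasFiniteIntegral_iff_ofReal (hpos.mono fun v hv => one_sub_exp_neg_mul_nonneg ht hv.le)]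
  calc ∫⁻ v, ENNReal.ofReal (1 - Real.exp (-t * v)) ∂ν
      ≤ ∫⁻ v, ENNReal.ofReal (max 1 t) * ENNReal.ofReal (min 1 v) ∂ν :=
        lintegral_mono_ae <| hpos.mono fun v hv => by
          rw [← ENNReal.ofReal_mul (by positivity)]
          exact ENNReal.ofReal_le_ofReal (one_sub_exp_neg_mul_le hv.le)
    _ < ∞ := by
        rw [lintegral_const_mul' _ _ ENNReal.ofReal_ne_top]
        exact ENNReal.mul_lt_top ENNReal.ofReal_lt_top hνint

lemma map_mul_prod_apply {ι : Type*} (ν : Measure ℝ) [SigmaFinite ν]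
    (P : Measure (ι → ℝ)) [SFinite P] {S : Set (ι → ℝ)} (hS : MeasurableSet S) :
    Measure.map (fun p : ℝ × (ι → ℝ) => fun k => p.1 * p.2 k) (ν.prod P) S
      = ∫⁻ j, P {y | (fun k => j * y k) ∈ S} ∂ν := by
  have hmeas : Measurable (fun p : ℝ × (ι → ℝ) => fun k => p.1 * p.2 k) := by fun_prop
  rw [Measure.map_apply hmeas hS, Measure.prod_apply (hmeas hS)]
  rfl

theorem stmt17_general (n : ℕ)
    -- Lévy measure ν on (0,∞) with ∫ min(1,x) dν < ∞
    (ν : Measure ℝ) [SigmaFinite ν] (hν0 : ν {x | x ≤ 0} = 0)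
    (hνint : ∫⁻ x, ENNReal.ofReal (min 1 x) ∂ν < ∞)
    -- the laws of the independent 1-Fréchet coordinates Y₁,…,Yₙ
    (σ : Fin n → ℝ) (hσ : ∀ k, 0 < σ k)
    (η : Fin n → Measure ℝ) (hηprob : ∀ k, IsProbabilityMeasure (η k))
    (hηcdf : ∀ k, ∀ x : ℝ, 0 < x →
      η k (Set.Iic x) = ENNReal.ofReal (Real.exp (-σ k / x)))
    -- μ is the image of ν ⊗ Law(Y₁,…,Yₙ) under (j, y) ↦ j·y
    (μ : Measure (Fin n → ℝ))
    (hμ : μ = Measure.map (fun p : ℝ × (Fin n → ℝ) => fun k => p.1 * p.2 k)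
      (ν.prod (Measure.pi η))) :
    ∀ x : Fin n → ℝ, (∀ k, 0 < x k) →
      μ {y : Fin n → ℝ | ∃ k, x k < y k}
        = ENNReal.ofReal (∫ v, (1 - Real.exp (-(∑ k, σ k / x k) * v)) ∂ν) := by
  intro x hx
  have ht : 0 ≤ ∑ k, σ k / x k := Finset.sum_nonneg fun k _ => (div_pos (hσ k) (hx k)).le
  have hS : MeasurableSet {y : Fin n → ℝ | ∃ k, x k < y k} := by
    simp only [Set.ofPred_exists]
    exact .iUnion fun k => measurableSet_lt measurable_const (measurable_pi_apply k)
  have hpos := ae_pos_of_measure_setOf_le_zero hν0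
  rw [hμ, map_mul_prod_apply ν _ hS, ofReal_integral_eq_lintegral_ofReal
    (integrable_one_sub_exp_neg_mul hν0 hνint ht)
    (hpos.mono fun j hj => one_sub_exp_neg_mul_nonneg ht hj.le)]
  exact lintegral_congr_ae <| hpos.mono fun j hj => pi_setOf_exists_lt_mul_of_frechet hηcdf hx hj

theorem stmt17 (n : ℕ)
    -- Lévy measure ν on (0,∞) with ∫ min(1,x) dν < ∞
    (ν : Measure ℝ) [SigmaFinite ν] (hν0 : ν {x | x ≤ 0} = 0)
    (hνint : ∫⁻ x, ENNReal.ofReal (min 1 x) ∂ν < ∞)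
    -- the laws of the independent 1-Fréchet coordinates Y₁,…,Yₙ
    (σ : Fin n → ℝ) (hσ : ∀ k, 0 < σ k)
    (η : Fin n → Measure ℝ) (hηprob : ∀ k, IsProbabilityMeasure (η k))
    (hηcdf : ∀ k, ∀ x : ℝ, 0 < x →
      η k (Set.Iic x) = ENNReal.ofReal (Real.exp (-σ k / x)))
    (hηcdf0 : ∀ k, ∀ x : ℝ, x ≤ 0 → η k (Set.Iic x) = 0)
    -- μ is the image of ν ⊗ Law(Y₁,…,Yₙ) under (j, y) ↦ j·y
    (μ : Measure (Fin n → ℝ))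
    (hμ : μ = Measure.map (fun p : ℝ × (Fin n → ℝ) => fun k => p.1 * p.2 k)
      (ν.prod (Measure.pi η))) :
    ∀ x : Fin n → ℝ, (∀ k, 0 < x k) →
      μ {y : Fin n → ℝ | ∃ k, x k < y k}
        = ENNReal.ofReal (∫ v, (1 - Real.exp (-(∑ k, σ k / x k) * v)) ∂ν) :=
  stmt17_general n ν hν0 hνint σ hσ η hηprob hηcdf μ hμ
end
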